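/- arXiv:1702.03527 — 4 statements merged into one kernel-verified Lean document; each statement's English description precedes it below -/
import Mathlib

section
/- In the exponential graph $K_m^{K_n}$ with $m < n$, the subgraph induced by constant maps is isomorphic to $K_m$, and $K_m^{K_n}$ folds onto this subgraph; consequently the neighborhood complex $\mathcal{N}(K_m^{K_n})$ is homotopy equivalent to the boundary of the $(m-1)$-simplex, i.e., to $S^{m-2}$. -/
/-- Adjacency in the exponential graph `K_m^{K_n}`. -/
def ExpAdj (n m : ℕ) (f g : Fin n → Fin m) : Prop :=
  ∀ i j : Fin n, i ≠ j → f i ≠ g j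

/-- Geometric realization of an abstract simplicial complex with vertex set `V`. -/
def Realization {V : Type*} (K : Finset V → Prop) : Type _ :=
  {w : V → ℝ // (∀ v, 0 ≤ w v) ∧ (∑ᶠ v, w v) = 1 ∧
    ∃ σ : Finset V, K σ ∧ ∀ v, w v ≠ 0 → v ∈ σ}

instance {V : Type*} (K : Finset V → Prop) : TopologicalSpace (Realization K) :=
  instTopologicalSpaceSubtype

/-- Faces of the neighborhood complex `𝒩(K_m^{K_n})`. -/
def NFace (n m : ℕ) (σ : Finset (Fin n → Fin m)) : Prop :=
  ∃ h : Fin n → Fin m, ∀ f ∈ σ, ExpAdj n m f h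

/-!
Every map `f : [n] → [m]` repeats some value `x` (pigeonhole, as `m < n`), and then every
neighbour `g` of `f` avoids `x` altogether, so `g` is also a neighbour of the constant map `x`.
Hence `f ↦ x` is a simplicial retraction of `𝒩(K_m^{K_n})` onto the complex on the constant maps,
which is the boundary of the simplex on `[m]`, and composed with the inclusion it is contiguous to
the identity; contiguous simplicial maps are linearly homotopic, so the retraction is a homotopy
equivalence. Radial projection from the barycenter is a continuous bijection from the compact
boundary of the simplex onto the sphere `S^{m-2}`, hence a homeomorphism.
-/

section ExpGraph

variable {n m : ℕ}

theorem ExpAdj.apply_ne_of_apply_eq_apply {f g : Fin n → Fin m} (h : ExpAdj n m f g)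
    {i j : Fin n} (hij : i ≠ j) (hf : f i = f j) (k : Fin n) : g k ≠ f i := by
  by_cases hik : i = k
  · subst hik
    exact fun hg => h j i hij.symm (hf.symm.trans hg.symm)
  · exact (h i k hik).symm

theorem expAdj_const_left_of_forall_ne {x : Fin m} {g : Fin n → Fin m} (h : ∀ j, g j ≠ x) :
    ExpAdj n m (fun _ => x) g :=
  fun _ j _ hx => h j hx.symm

theorem expAdj_const_const_iff (hn : 1 < n) (x y : Fin m) :
    ExpAdj n m (fun _ => x) (fun _ => y) ↔ x ≠ y :=
  ⟨fun h => h ⟨0, by omega⟩ ⟨1, hn⟩ (by simp [Fin.ext_iff]),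
    fun hxy => expAdj_const_left_of_forall_ne fun _ => hxy.symm⟩

theorem exists_ne_apply_eq_apply (hmn : m < n) (f : Fin n → Fin m) :
    ∃ i j, i ≠ j ∧ f i = f j :=
  Fintype.exists_ne_map_eq_of_card_lt f (by simpa using hmn)

noncomputable def repeatedValue (hmn : m < n) (f : Fin n → Fin m) : Fin m :=
  f (exists_ne_apply_eq_apply hmn f).choose

theorem repeatedValue_const (hmn : m < n) (x : Fin m) :
    repeatedValue hmn (fun _ => x) = x :=
  rfl

theorem ExpAdj.repeatedValue_ne (hmn : m < n) {f g : Fin n → Fin m} (h : ExpAdj n m f g)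
    (k : Fin n) : g k ≠ repeatedValue hmn f := by
  obtain ⟨j, hij, hf⟩ := (exists_ne_apply_eq_apply hmn f).choose_spec
  exact h.apply_ne_of_apply_eq_apply hij hf k

theorem ExpAdj.const_repeatedValue (hmn : m < n) {f g : Fin n → Fin m} (h : ExpAdj n m f g) :
    ExpAdj n m (fun _ => repeatedValue hmn f) g :=
  expAdj_const_left_of_forall_ne (h.repeatedValue_ne hmn)

end ExpGraph

open Finset

section SimplicialMap

variable {V W : Type*} [DecidableEq W]

def IsSimplicialMap (K : Finset V → Prop) (L : Finset W → Prop) (f : V → W) : Prop :=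
  ∀ σ, K σ → L (σ.image f)

def Contiguous (K : Finset V → Prop) (L : Finset W → Prop) (f g : V → W) : Prop :=
  ∀ σ, K σ → L (σ.image f ∪ σ.image g)

theorem IsSimplicialMap.id [DecidableEq V] (K : Finset V → Prop) : IsSimplicialMap K K id := by
  simp [IsSimplicialMap]

theorem IsSimplicialMap.comp {U : Type*} [DecidableEq U] {K : Finset V → Prop}
    {L : Finset W → Prop} {M : Finset U → Prop} {g : W → U} {f : V → W}
    (hg : IsSimplicialMap L M g) (hf : IsSimplicialMap K L f) : IsSimplicialMap K M (g ∘ f) :=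
  fun σ hσ => by simpa [image_image] using hg _ (hf σ hσ)

end SimplicialMap

theorem isClosed_setOf_support_subset {V : Type*} (σ : Finset V) :
    IsClosed {w : V → ℝ | ∀ v, w v ≠ 0 → v ∈ σ} := by
  simp only [Set.ofPred_forall]
  refine isClosed_iInter fun v => ?_
  by_cases hv : v ∈ σ
  · simp [hv]
  · simpa [hv] using isClosed_eq (continuous_apply v) continuous_const

namespace Realization

variable {V W U : Type*} [Fintype V] {K : Finset V → Prop} {L : Finset W → Prop}

theorem sum_eq_one (w : Realization K) : ∑ v, w.1 v = 1 := by
  simpa [finsum_eq_sum_of_fintype] using w.2.2.1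

def mk (w : V → ℝ) (h0 : ∀ v, 0 ≤ w v) (h1 : ∑ v, w v = 1)
    (hface : ∃ σ, K σ ∧ ∀ v, w v ≠ 0 → v ∈ σ) : Realization K :=
  ⟨w, h0, by rwa [finsum_eq_sum_of_fintype], hface⟩

instance : CompactSpace (Realization K) := by
  have hcarrier : {w : V → ℝ | (∀ v, 0 ≤ w v) ∧ (∑ᶠ v, w v) = 1 ∧
      ∃ σ, K σ ∧ ∀ v, w v ≠ 0 → v ∈ σ} =
      stdSimplex ℝ V ∩ ⋃ σ : {σ // K σ}, {w | ∀ v, w v ≠ 0 → v ∈ σ.1} := by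
    ext w
    simp [stdSimplex, finsum_eq_sum_of_fintype, and_assoc]
  have hcompact : IsCompact {w : V → ℝ | (∀ v, 0 ≤ w v) ∧ (∑ᶠ v, w v) = 1 ∧
      ∃ σ, K σ ∧ ∀ v, w v ≠ 0 → v ∈ σ} := by
    rw [hcarrier]
    exact (isCompact_stdSimplex ℝ V).inter_right
      (isClosed_iUnion_of_finite fun σ => isClosed_setOf_support_subset σ.1)
  exact isCompact_iff_compactSpace.mp hcompact

variable [DecidableEq W]

def pushforward (f : V → W) (w : V → ℝ) (x : W) : ℝ :=
  ∑ v with f v = x, w v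

theorem pushforward_nonneg (f : V → W) {w : V → ℝ} (hw : ∀ v, 0 ≤ w v) (x : W) :
    0 ≤ pushforward f w x :=
  sum_nonneg fun v _ => hw v

theorem sum_pushforward [Fintype W] (f : V → W) (w : V → ℝ) :
    ∑ x, pushforward f w x = ∑ v, w v :=
  sum_fiberwise _ _ _

theorem mem_image_of_pushforward_ne_zero (f : V → W) {w : V → ℝ} {σ : Finset V}
    (hw : ∀ v, w v ≠ 0 → v ∈ σ) {x : W} (hx : pushforward f w x ≠ 0) : x ∈ σ.image f := by
  obtain ⟨v, hv, hv0⟩ := exists_ne_zero_of_sum_ne_zero hx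
  exact mem_image.2 ⟨v, hw v hv0, (mem_filter.1 hv).2⟩

theorem continuous_pushforward (f : V → W) : Continuous (pushforward (W := W) f) :=
  continuous_pi fun _ => continuous_finsetSum _ fun v _ => continuous_apply v

theorem pushforward_id [DecidableEq V] (w : V → ℝ) : pushforward id w = w := by
  ext x
  simp [pushforward, sum_filter]

theorem pushforward_comp [Fintype W] [DecidableEq U] (g : W → U) (f : V → W) (w : V → ℝ) :
    pushforward g (pushforward f w) = pushforward (g ∘ f) w := by
  ext z
  simp only [pushforward]
  rw [sum_fiberwise_eq_sum_filter]
  simp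

variable [Fintype W]

def map (f : V → W) (hf : IsSimplicialMap K L f) : C(Realization K, Realization L) where
  toFun w := mk (pushforward f w.1) (pushforward_nonneg f w.2.1)
    (by rw [sum_pushforward, sum_eq_one]) <| by
      obtain ⟨σ, hσ, hw⟩ := w.2.2.2
      exact ⟨_, hf σ hσ, fun x hx => mem_image_of_pushforward_ne_zero f hw hx⟩
  continuous_toFun := ((continuous_pushforward f).comp continuous_subtype_val).subtype_mk _

@[simp]
theorem map_apply_val (f : V → W) (hf : IsSimplicialMap K L f) (w : Realization K) :
    (map f hf w).1 = pushforward f w.1 :=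
  rfl

theorem map_eq_id [DecidableEq V] {f : V → V} (hf : IsSimplicialMap K K f) (hid : ∀ v, f v = v) :
    map f hf = ContinuousMap.id _ := by
  obtain rfl : f = id := funext hid
  ext w : 1
  exact Subtype.ext (pushforward_id w.1)

theorem map_comp [Fintype U] [DecidableEq U] {M : Finset U → Prop} {g : W → U}
    {f : V → W} (hg : IsSimplicialMap L M g) (hf : IsSimplicialMap K L f) :
    (map g hg).comp (map f hf) = map (g ∘ f) (hg.comp hf) := by
  ext w : 1
  exact Subtype.ext (pushforward_comp g f w.1)

-- The straight-line homotopy: contiguity keeps each segment inside a single face.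
def homotopyOfContiguous {f g : V → W} (hf : IsSimplicialMap K L f) (hg : IsSimplicialMap K L g)
    (hfg : Contiguous K L f g) : (map f hf).Homotopy (map g hg) where
  toFun p := mk ((1 - (p.1 : ℝ)) • pushforward f p.2.1 + (p.1 : ℝ) • pushforward g p.2.1)
    (fun x => add_nonneg
      (mul_nonneg (unitInterval.one_minus_nonneg _) (pushforward_nonneg f p.2.2.1 x))
      (mul_nonneg (unitInterval.nonneg _) (pushforward_nonneg g p.2.2.1 x)))
    (by simp [sum_add_distrib, ← mul_sum, sum_pushforward, sum_eq_one]) <| by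
      obtain ⟨σ, hσ, hw⟩ := p.2.2.2.2
      refine ⟨_, hfg σ hσ, fun x hx => ?_⟩
      by_cases hfx : pushforward f p.2.1 x = 0
      · have hgx : pushforward g p.2.1 x ≠ 0 := fun hgx => hx (by simp [hfx, hgx])
        exact mem_union_right _ (mem_image_of_pushforward_ne_zero g hw hgx)
      · exact mem_union_left _ (mem_image_of_pushforward_ne_zero f hw hfx)
  continuous_toFun := by
    refine Continuous.subtype_mk ?_ _
    have hw : Continuous fun p : unitInterval × Realization K => p.2.1 :=
      continuous_subtype_val.comp continuous_snd
    have ht : Continuous fun p : unitInterval × Realization K => (p.1 : ℝ) :=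
      continuous_subtype_val.comp continuous_fst
    exact ((continuous_const.sub ht).smul ((continuous_pushforward f).comp hw)).add
      (ht.smul ((continuous_pushforward g).comp hw))
  map_zero_left w := Subtype.ext (by simp [mk])
  map_one_left w := Subtype.ext (by simp [mk])

def homotopyEquivOfRetraction [DecidableEq V] {r : V → W} {s : W → V}
    (hr : IsSimplicialMap K L r) (hs : IsSimplicialMap L K s) (hrs : ∀ x, r (s x) = x)
    (hsr : Contiguous K K (s ∘ r) id) :
    ContinuousMap.HomotopyEquiv (Realization K) (Realization L) where
  toFun := map r hr
  invFun := map s hs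
  left_inv := by
    rw [map_comp, ← map_eq_id (IsSimplicialMap.id K) fun _ => rfl]
    exact ⟨homotopyOfContiguous _ _ hsr⟩
  right_inv := by
    rw [map_comp, map_eq_id (f := r ∘ s) _ hrs]

end Realization

section RadialProjection

variable {X E : Type*} [NormedAddCommGroup E] [NormedSpace ℝ E] {g : X → E}

noncomputable def radialProjection (g : X → E) (hg0 : ∀ x, g x ≠ 0) (x : X) :
    Metric.sphere (0 : E) 1 :=
  ⟨‖g x‖⁻¹ • g x, by simp [norm_smul, hg0 x]⟩

theorem continuous_radialProjection [TopologicalSpace X] (hg : Continuous g)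
    (hg0 : ∀ x, g x ≠ 0) : Continuous (radialProjection g hg0) :=
  ((hg.norm.inv₀ fun x => norm_ne_zero_iff.2 (hg0 x)).smul hg).subtype_mk _

theorem bijective_radialProjection (hg0 : ∀ x, g x ≠ 0)
    (hray : ∀ v : E, v ≠ 0 → ∃! x, ∃ c : ℝ, 0 < c ∧ g x = c • v) :
    Function.Bijective (radialProjection g hg0) := by
  have hpos : ∀ x, 0 < ‖g x‖ := fun x => norm_pos_iff.2 (hg0 x)
  have hg_eq : ∀ x, g x = ‖g x‖ • (radialProjection g hg0 x : E) := fun x => by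
    simp [radialProjection, smul_smul, (hpos x).ne']
  constructor
  · intro x y hxy
    exact (hray _ (ne_zero_of_mem_unit_sphere _)).unique ⟨_, hpos x, hg_eq x⟩
      ⟨_, hpos y, hxy ▸ hg_eq y⟩
  · intro v
    obtain ⟨x, ⟨c, hc, hx⟩, -⟩ := hray v (ne_zero_of_mem_unit_sphere v)
    refine ⟨x, Subtype.ext ?_⟩
    simp [radialProjection, hx, norm_smul, abs_of_pos hc, smul_smul, hc.ne']

noncomputable def homeomorphSphereOfExistsUniqueRay [TopologicalSpace X] [CompactSpace X]
    (hg : Continuous g) (hg0 : ∀ x, g x ≠ 0)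
    (hray : ∀ v : E, v ≠ 0 → ∃! x, ∃ c : ℝ, 0 < c ∧ g x = c • v) :
    X ≃ₜ Metric.sphere (0 : E) 1 :=
  (continuous_radialProjection hg hg0).homeoOfEquivCompactToT2
    (f := Equiv.ofBijective _ (bijective_radialProjection hg0 hray))

end RadialProjection

def SimplexBoundary (V : Type*) (σ : Finset V) : Prop :=
  ∃ v, v ∉ σ

namespace Realization

variable {V : Type*}

theorem exists_eq_zero (u : Realization (SimplexBoundary V)) : ∃ v, u.1 v = 0 := by
  obtain ⟨σ, ⟨v, hv⟩, hu⟩ := u.2.2.2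
  exact ⟨v, not_imp_comm.1 (hu v) hv⟩

theorem exists_simplexBoundary_face [Fintype V] [DecidableEq V] {u : V → ℝ} {j : V}
    (hj : u j = 0) : ∃ σ, SimplexBoundary V σ ∧ ∀ v, u v ≠ 0 → v ∈ σ :=
  ⟨univ.erase j, ⟨j, notMem_erase j _⟩,
    fun v hv => mem_erase.2 ⟨by rintro rfl; exact hv hj, mem_univ v⟩⟩

noncomputable def offset [Fintype V] {K : Finset V → Prop} (u : Realization K) (v : V) : ℝ :=
  u.1 v - (Fintype.card V : ℝ)⁻¹

theorem sum_offset [Fintype V] [Nonempty V] {K : Finset V → Prop} (u : Realization K) :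
    ∑ v, u.offset v = 0 := by
  simp [offset, sum_sub_distrib, sum_eq_one]

-- The ray from the barycenter in direction `w` leaves the simplex at the unique `c` for which
-- the smallest coordinate of the barycenter plus `c • w` is zero.
theorem existsUnique_simplexBoundary_ray [Fintype V] [Nonempty V] {w : V → ℝ}
    (hsum : ∑ v, w v = 0) (hw : w ≠ 0) :
    ∃! u : Realization (SimplexBoundary V), ∃ c : ℝ, 0 < c ∧ u.offset = c • w := by
  classical
  set β : ℝ := (Fintype.card V : ℝ)⁻¹ with hβ
  have hβpos : 0 < β := by positivity
  have hparam_le : ∀ (u u' : Realization (SimplexBoundary V)) (c c' : ℝ), 0 < c →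
      u.offset = c • w → u'.offset = c' • w → c' ≤ c := by
    intro u u' c c' hc hu hu'
    obtain ⟨j, hj⟩ := exists_eq_zero u
    have h1 := congrFun hu j
    have h2 := congrFun hu' j
    have h3 := u'.2.1 j
    simp only [offset, ← hβ, hj, Pi.smul_apply, smul_eq_mul] at h1 h2
    have hwj : w j < 0 := by nlinarith
    nlinarith
  obtain ⟨j, hj⟩ := Finite.exists_min w
  have hwj : w j < 0 := by
    by_contra! h
    have hnn : ∀ v ∈ univ, 0 ≤ w v := fun v _ => h.trans (hj v)
    exact hw (funext fun v => (sum_eq_zero_iff_of_nonneg hnn).1 hsum v (mem_univ v))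
  set c := β / -w j with hc
  have hcpos : 0 < c := div_pos hβpos (neg_pos.2 hwj)
  have hcj : β + c * w j = 0 := by rw [hc]; field_simp [hwj.ne]; ring
  let u₀ : Realization (SimplexBoundary V) :=
    Realization.mk (fun v => β + c * w v) (fun v => by nlinarith [hj v])
      (by simp [sum_add_distrib, ← mul_sum, hsum, hβ]) (exists_simplexBoundary_face hcj)
  have hu₀ : u₀.offset = c • w := funext fun v => by simp [u₀, offset, Realization.mk, ← hβ]
  refine ⟨u₀, ⟨c, hcpos, hu₀⟩, ?_⟩
  rintro u ⟨c', hc', hu⟩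
  obtain rfl : c' = c :=
    le_antisymm (hparam_le _ _ _ _ hcpos hu₀ hu) (hparam_le _ _ _ _ hc' hu hu₀)
  exact Subtype.ext (funext fun v => by simpa [offset] using congrFun (hu.trans hu₀.symm) v)

end Realization

section SimplexBoundarySphere

variable {k : ℕ}

theorem Fin.init_eq_smul_iff_of_sum_eq_zero {z : Fin (k + 1) → ℝ} (hz : ∑ j, z j = 0) (c : ℝ)
    (y : Fin k → ℝ) : Fin.init z = c • y ↔ z = c • Fin.snoc y (-∑ i, y i) := by
  constructor
  · intro h
    have hlast : z (Fin.last k) = -∑ i, Fin.init z i := by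
      rw [Fin.sum_univ_castSucc] at hz
      simp only [Fin.init]
      linarith
    funext j
    induction j using Fin.lastCases with
    | last => simp [hlast, h, mul_sum]
    | cast i => simpa [Fin.init] using congrFun h i
  · rintro rfl
    funext i
    simp [Fin.init]

theorem Fin.sum_snoc_neg_sum (y : Fin k → ℝ) :
    ∑ j, Fin.snoc (α := fun _ => ℝ) y (-∑ i, y i) j = 0 := by
  simp [Fin.sum_univ_castSucc]

-- Dropping the last coordinate loses nothing, since the offsets sum to zero.
noncomputable def boundaryChart (u : Realization (SimplexBoundary (Fin (k + 1)))) :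
    EuclideanSpace ℝ (Fin k) :=
  WithLp.toLp 2 (Fin.init u.offset)

theorem continuous_boundaryChart : Continuous (boundaryChart (k := k)) :=
  (PiLp.continuous_toLp 2 _).comp <| continuous_pi fun _ =>
    ((continuous_apply _).comp continuous_subtype_val).sub continuous_const

theorem boundaryChart_ne_zero (u : Realization (SimplexBoundary (Fin (k + 1)))) :
    boundaryChart u ≠ 0 := by
  intro hu
  have h0 : u.offset = 0 := by
    simpa using (Fin.init_eq_smul_iff_of_sum_eq_zero u.sum_offset 0 0).1
      (by simpa [boundaryChart] using hu)
  obtain ⟨j, hj⟩ := u.exists_eq_zero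
  have := congrFun h0 j
  simp [Realization.offset, hj] at this
  linarith

theorem existsUnique_boundaryChart_ray {v : EuclideanSpace ℝ (Fin k)} (hv : v ≠ 0) :
    ∃! u, ∃ c : ℝ, 0 < c ∧ boundaryChart u = c • v := by
  have hw : Fin.snoc (α := fun _ => ℝ) v.ofLp (-∑ i, v i) ≠ 0 := fun h =>
    hv <| (WithLp.ofLp_eq_zero 2).1 <| funext fun i => by simpa using congrFun h i.castSucc
  refine (existsUnique_congr fun u => ?_).2
    (Realization.existsUnique_simplexBoundary_ray (Fin.sum_snoc_neg_sum _) hw)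
  refine exists_congr fun c => and_congr_right fun _ => ?_
  rw [← Fin.init_eq_smul_iff_of_sum_eq_zero u.sum_offset, boundaryChart, ← WithLp.toLp_smul,
    (WithLp.toLp_injective 2).eq_iff]

noncomputable def simplexBoundaryHomeomorphSphere (k : ℕ) :
    Realization (SimplexBoundary (Fin (k + 1))) ≃ₜ
      Metric.sphere (0 : EuclideanSpace ℝ (Fin k)) 1 :=
  homeomorphSphereOfExistsUniqueRay continuous_boundaryChart boundaryChart_ne_zero
    fun _ => existsUnique_boundaryChart_ray

end SimplexBoundarySphere

section NeighborhoodComplex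

variable {n m : ℕ}

theorem isSimplicialMap_repeatedValue (hmn : m < n) :
    IsSimplicialMap (NFace n m) (SimplexBoundary (Fin m)) (repeatedValue hmn) := by
  rintro σ ⟨h, hσ⟩
  refine ⟨h ⟨0, by omega⟩, fun hmem => ?_⟩
  obtain ⟨f, hf, hfx⟩ := mem_image.1 hmem
  exact (hσ f hf).repeatedValue_ne hmn _ hfx.symm

theorem isSimplicialMap_const :
    IsSimplicialMap (SimplexBoundary (Fin m)) (NFace n m) (fun x (_ : Fin n) => x) := by
  rintro σ ⟨x, hx⟩
  refine ⟨fun _ => x, fun f hf => ?_⟩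
  obtain ⟨y, hy, rfl⟩ := mem_image.1 hf
  exact expAdj_const_left_of_forall_ne fun _ hxy => hx (hxy ▸ hy)

theorem contiguous_const_repeatedValue (hmn : m < n) :
    Contiguous (NFace n m) (NFace n m) ((fun x (_ : Fin n) => x) ∘ repeatedValue hmn) id := by
  rintro σ ⟨h, hσ⟩
  refine ⟨h, fun f hf => ?_⟩
  rcases mem_union.1 hf with hf | hf
  · obtain ⟨g, hg, rfl⟩ := mem_image.1 hf
    exact (hσ g hg).const_repeatedValue hmn
  · obtain ⟨g, hg, rfl⟩ := mem_image.1 hf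
    exact hσ g hg

noncomputable def nFaceHomotopyEquivSimplexBoundary (hmn : m < n) :
    ContinuousMap.HomotopyEquiv (Realization (NFace n m))
      (Realization (SimplexBoundary (Fin m))) :=
  Realization.homotopyEquivOfRetraction (isSimplicialMap_repeatedValue hmn) isSimplicialMap_const
    (repeatedValue_const hmn) (contiguous_const_repeatedValue hmn)

end NeighborhoodComplex

/-- For `2 ≤ m < n`: the subgraph of `K_m^{K_n}` induced by the constant maps is
isomorphic to `K_m` (constants `⟨x⟩, ⟨y⟩` are adjacent iff `x ≠ y`), the graph
`K_m^{K_n}` folds onto this subgraph (every non-constant vertex `f` has a constant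
`⟨x⟩` with `N(f) ⊆ N(⟨x⟩)`), and consequently `𝒩(K_m^{K_n})` is homotopy
equivalent to the boundary of the `(m-1)`-simplex, i.e. to the sphere `S^{m-2}`. -/
theorem nbhd_complex_exp_graph_sphere (n m : ℕ) (hm : 2 ≤ m) (hmn : m < n) :
    (∀ x y : Fin m, ExpAdj n m (fun _ => x) (fun _ => y) ↔ x ≠ y) ∧
    (∀ f : Fin n → Fin m, (¬ ∃ x, ∀ i, f i = x) →
      ∃ x : Fin m, ∀ g : Fin n → Fin m,
        ExpAdj n m f g → ExpAdj n m (fun _ => x) g) ∧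
    Nonempty (ContinuousMap.HomotopyEquiv (Realization (NFace n m))
      (Metric.sphere (0 : EuclideanSpace ℝ (Fin (m - 1))) 1)) := by
  obtain ⟨k, rfl⟩ : ∃ k, m = k + 1 := ⟨m - 1, by omega⟩
  refine ⟨expAdj_const_const_iff (by omega), fun f _ => ⟨repeatedValue hmn f, ?_⟩, ?_⟩
  · exact fun g hg => hg.const_repeatedValue hmn
  · exact ⟨(nFaceHomotopyEquivSimplexBoundary hmn).trans
      (simplexBoundaryHomeomorphSphere k).toHomotopyEquiv⟩
end

section
/- Let $G$ be the subgraph of $K_m^{K_n}$ induced by constant and injective maps, and let $\sigma \subseteq V(G)$ be finite. For $i \in [n]$ define $X_i^\sigma = \{f(i) : f \in \sigma\}$ and $A_i^\sigma = [m] \setminus \bigcup_{j \neq i} X_j^\sigma$. Then $\sigma$ is a simplex of the neighborhood complex $\mathcal{N}(G)$ (i.e., the vertices of $\sigma$ have a common neighbor in $K_m^{K_n}$) if and only if $A_i^\sigma \neq \emptyset$ for all $i \in [n]$. -/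
/-- Vertices of the fold `G` of `K_m^{K_n}`: constant maps and injective maps. -/
def GVert (n m : ℕ) (f : Fin n → Fin m) : Prop :=
  (∃ x, ∀ i, f i = x) ∨ Function.Injective f

/-- `X_i^σ = {f i : f ∈ σ}`. -/
def Xi (n m : ℕ) (σ : Finset (Fin n → Fin m)) (i : Fin n) : Finset (Fin m) :=
  σ.image (fun f => f i)

/-- `A_i^σ = [m] \ ⋃_{j ≠ i} X_j^σ`. -/
def Ai (n m : ℕ) (σ : Finset (Fin n → Fin m)) (i : Fin n) : Finset (Fin m) :=
  Finset.univ \ (Finset.univ.erase i).biUnion (fun j => Xi n m σ j)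

/-- A finite set `σ` of vertices of the fold `G` of `K_m^{K_n}` is a simplex of
`𝒩(G)` (i.e. has a common neighbor in `K_m^{K_n}`) iff `A_i^σ ≠ ∅` for all `i`. -/
theorem simplex_iff_Ai_nonempty (n m : ℕ) (σ : Finset (Fin n → Fin m))
    (hσG : ∀ f ∈ σ, GVert n m f) :
    (∃ h : Fin n → Fin m, ∀ f ∈ σ, ExpAdj n m f h) ↔
      ∀ i : Fin n, (Ai n m σ i).Nonempty := by
  constructor
  · rintro ⟨h, hh⟩ i
    refine ⟨h i, ?_⟩
    simp only [Ai, Xi, Finset.mem_sdiff, Finset.mem_univ, true_and, Finset.mem_biUnion,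
      Finset.mem_erase, Finset.mem_image, not_exists, not_and]
    rintro j ⟨hji, -⟩ f hf
    exact hh f hf j i hji
  · intro hA
    choose h hh using hA
    refine ⟨h, fun f hf i j hij => ?_⟩
    have := hh j
    simp only [Ai, Xi, Finset.mem_sdiff, Finset.mem_univ, true_and, Finset.mem_biUnion,
      Finset.mem_erase, Finset.mem_image, not_exists, not_and] at this
    exact this i ⟨hij, trivial⟩ f hf
end

section
/- Let $G$ be the subgraph of $K_m^{K_n}$ induced by constant and injective maps ($m > n \geq 3$), and let $\mu = \bigcup_i \mu_i$ be the element matching defined by successively matching simplices with the constant maps $\langle 1 \rangle, \langle 2 \rangle, \dots, \langle m \rangle$: $S_i = \{\sigma \in S'_{i-1} : \langle i \rangle \notin \sigma, \sigma \cup \langle i \rangle \in S'_{i-1}\}$, $\mu_i(\sigma) = \sigma \cup \langle i \rangle$, $S'_i = S'_{i-1} \setminus (S_i \cup \mu_i(S_i))$ with $S'_0$ the full face poset. Then $\mu$ is an acyclic matching on the face poset of $\mathcal{N}(G)$. -/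
/-- The constant map `⟨k+1⟩` (colors `1,…,m` are represented by `0,…,m-1`). -/
def cst (n m : ℕ) [NeZero m] (k : ℕ) : Fin n → Fin m := fun _ => (Fin.ofNat m k)

/-- Nonempty faces of the neighborhood complex `𝒩(G)` of the fold `G`. -/
def NFaceG (n m : ℕ) (σ : Finset (Fin n → Fin m)) : Prop :=
  (∀ f ∈ σ, GVert n m f) ∧ ∃ h, GVert n m h ∧ ∀ f ∈ σ, ExpAdj n m f h

/-- `Sp n m k` is the set `S'_{k}` of the paper (with `S'_0` the full face poset
of `𝒩(G)`): the faces still unmatched after matching with the constant maps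
`⟨1⟩, …, ⟨k⟩`. -/
def Sp (n m : ℕ) [NeZero m] : ℕ → Set (Finset (Fin n → Fin m))
  | 0 => {σ | σ.Nonempty ∧ NFaceG n m σ}
  | k + 1 =>
      Sp n m k \
        ({σ | σ ∈ Sp n m k ∧ cst n m k ∉ σ ∧ insert (cst n m k) σ ∈ Sp n m k} ∪
          (insert (cst n m k)) ''
            {σ | σ ∈ Sp n m k ∧ cst n m k ∉ σ ∧ insert (cst n m k) σ ∈ Sp n m k})

/-- `MSet n m k` is the set `S_{k+1}` of the paper: the faces matched (by adding
the constant map `⟨k+1⟩`) at stage `k+1`. -/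
def MSet (n m : ℕ) [NeZero m] (k : ℕ) : Set (Finset (Fin n → Fin m)) :=
  {σ | σ ∈ Sp n m k ∧ cst n m k ∉ σ ∧ insert (cst n m k) σ ∈ Sp n m k}

/-- A face of `𝒩(G)` is critical when it is unmatched by the matching `μ`. -/
def Critical (n m : ℕ) [NeZero m] (σ : Finset (Fin n → Fin m)) : Prop :=
  σ ∈ Sp n m 0 ∧ ∀ k < m, σ ∉ MSet n m k ∧ ¬ ∃ τ ∈ MSet n m k, σ = insert (cst n m k) τ

/-!
Let `k` be the earliest stage at which a face of a putative cycle is matched, and write `v` for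
the vertex `⟨k⟩` added at that stage. Along a step `μ(σ) ≻ τ` of the cycle the vertex `v` can
never be dropped: if it were, `τ` and `τ ∪ {v} = μ(σ)` would both still be available at stage
`k`, so `τ` would have been matched at stage `k` with partner `μ(σ)`, which forces `τ = σ`.
The face matched at stage `k` avoids `v` while its partner contains it, so `v` propagates all
the way around the cycle and back into that face, a contradiction.
-/

theorem Nat.forall_lt_of_succ_mod {t a : ℕ} {p : ℕ → Prop} (ha : a < t)
    (hstep : ∀ i < t, p i → p ((i + 1) % t)) (hp : p a) : ∀ i < t, p i := by
  have hpos : 0 < t := by omega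
  have hshift : ∀ s, p ((a + s) % t) := by
    intro s
    induction s with
    | zero => simpa [Nat.mod_eq_of_lt ha] using hp
    | succ s ih =>
      simpa [Nat.mod_add_mod, Nat.add_assoc] using hstep _ (Nat.mod_lt _ hpos) ih
  intro i hi
  simpa [show a + (i + t - a) = i + t by omega, Nat.mod_eq_of_lt hi] using hshift (i + t - a)

theorem Nat.succ_mod_ne_self {t i : ℕ} (ht : 2 ≤ t) (hi : i < t) : (i + 1) % t ≠ i := by
  rcases Nat.lt_or_ge (i + 1) t with h | h
  · rw [Nat.mod_eq_of_lt h]; omega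
  · rw [show i + 1 = t by omega, Nat.mod_self]; omega

namespace ElementMatching

variable {α : Type*} [DecidableEq α]

def matched (T : Set (Finset α)) (a : α) : Set (Finset α) :=
  {σ | σ ∈ T ∧ a ∉ σ ∧ insert a σ ∈ T}

/-- The set `S'_k` of the element matching of `S` with the vertices `x 0, x 1, …` in turn. -/
def remaining (x : ℕ → α) (S : Set (Finset α)) : ℕ → Set (Finset α)
  | 0 => S
  | k + 1 => remaining x S k \
      (matched (remaining x S k) (x k) ∪ insert (x k) '' matched (remaining x S k) (x k))

def matchedAt (x : ℕ → α) (S : Set (Finset α)) (k : ℕ) : Set (Finset α) :=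
  matched (remaining x S k) (x k)

variable {x : ℕ → α} {S : Set (Finset α)} {σ τ : Finset α} {j j' k : ℕ}

theorem remaining_antitone : Antitone (remaining x S) :=
  antitone_nat_of_succ_le fun _ _ hσ => hσ.1

theorem notMem_remaining_succ_of_mem_matchedAt (hσ : σ ∈ matchedAt x S k) :
    σ ∉ remaining x S (k + 1) :=
  fun h => h.2 (Or.inl hσ)

theorem insert_notMem_remaining_succ_of_mem_matchedAt (hσ : σ ∈ matchedAt x S k) :
    insert (x k) σ ∉ remaining x S (k + 1) :=
  fun h => h.2 (Or.inr ⟨σ, hσ, rfl⟩)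

theorem covBy_insert_of_mem_matchedAt (hσ : σ ∈ matchedAt x S k) : σ ⋖ insert (x k) σ :=
  Finset.covBy_insert hσ.2.1

theorem insert_mem_of_mem_matchedAt (hσ : σ ∈ matchedAt x S k) : insert (x k) σ ∈ S :=
  remaining_antitone (Nat.zero_le k) hσ.2.2

theorem eq_of_mem_matchedAt_of_insert_eq_insert (hσ : σ ∈ matchedAt x S k)
    (hτ : τ ∈ matchedAt x S k) (h : insert (x k) σ = insert (x k) τ) : σ = τ := by
  simpa [Finset.erase_insert hσ.2.1, Finset.erase_insert hτ.2.1] using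
    congrArg (Finset.erase · (x k)) h

theorem stage_eq_of_insert_eq_insert (hσ : σ ∈ matchedAt x S j) (hτ : τ ∈ matchedAt x S j')
    (h : insert (x j) σ = insert (x j') τ) : j = j' := by
  rcases lt_trichotomy j j' with hlt | heq | hgt
  · exact absurd (h ▸ remaining_antitone hlt hτ.2.2)
      (insert_notMem_remaining_succ_of_mem_matchedAt hσ)
  · exact heq
  · exact absurd (h ▸ remaining_antitone hgt hσ.2.2)
      (insert_notMem_remaining_succ_of_mem_matchedAt hτ)

theorem ne_insert_of_mem_matchedAt (hσ : σ ∈ matchedAt x S j) (hτ : τ ∈ matchedAt x S j') :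
    σ ≠ insert (x j') τ := by
  rintro rfl
  rcases lt_trichotomy j' j with hlt | rfl | hgt
  · exact insert_notMem_remaining_succ_of_mem_matchedAt hτ (remaining_antitone hlt hσ.1)
  · exact hσ.2.1 (Finset.mem_insert_self _ _)
  · exact notMem_remaining_succ_of_mem_matchedAt hσ (remaining_antitone hgt hτ.2.2)

theorem eq_of_covBy_insert_of_notMem (hkj : k ≤ j) (hkj' : k ≤ j')
    (hσ : σ ∈ matchedAt x S j) (hτ : τ ∈ matchedAt x S j') (hcov : τ ⋖ insert (x j) σ)
    (hk : x k ∈ insert (x j) σ) (hkτ : x k ∉ τ) : τ = σ := by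
  obtain ⟨a, -, hins⟩ := Finset.covBy_iff_exists_insert.mp hcov
  have ha : a = x k := by
    rw [← hins] at hk
    exact ((Finset.mem_insert.mp hk).resolve_right hkτ).symm
  subst ha
  have hτk : τ ∈ matchedAt x S k :=
    ⟨remaining_antitone hkj' hτ.1, hkτ, hins ▸ remaining_antitone hkj hσ.2.2⟩
  obtain rfl : k = j := stage_eq_of_insert_eq_insert hτk hσ hins
  exact eq_of_mem_matchedAt_of_insert_eq_insert hτk hσ hins

theorem not_exists_cycle :
    ¬ ∃ (t : ℕ) (f : ℕ → Finset α) (j : ℕ → ℕ), 2 ≤ t ∧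
      (∀ i < t, f i ∈ matchedAt x S (j i)) ∧
      (∀ i < t, ∀ i' < t, f i = f i' → i = i') ∧
      (∀ i < t, f ((i + 1) % t) ⋖ insert (x (j i)) (f i)) := by
  rintro ⟨t, f, j, ht, hf, hinj, hcov⟩
  obtain ⟨i₀, hi₀, hmin⟩ :=
    Finset.exists_min_image (Finset.range t) j ⟨0, Finset.mem_range.mpr (by omega)⟩
  rw [Finset.mem_range] at hi₀
  have hnext_lt : ∀ i < t, (i + 1) % t < t := fun i _ => Nat.mod_lt _ (by omega)
  have hstep : ∀ i < t, x (j i₀) ∈ insert (x (j i)) (f i) → x (j i₀) ∈ f ((i + 1) % t) := by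
    intro i hi hmem
    by_contra hnot
    have heq := eq_of_covBy_insert_of_notMem (hmin i (Finset.mem_range.mpr hi))
      (hmin _ (Finset.mem_range.mpr (hnext_lt i hi))) (hf i hi) (hf _ (hnext_lt i hi))
      (hcov i hi) hmem hnot
    exact Nat.succ_mod_ne_self ht hi (hinj _ (hnext_lt i hi) _ hi heq)
  have hall := Nat.forall_lt_of_succ_mod (hnext_lt i₀ hi₀)
    (fun i hi hmem => hstep i hi (Finset.mem_insert_of_mem hmem))
    (hstep i₀ hi₀ (Finset.mem_insert_self _ _))
  exact (hf i₀ hi₀).2.1 (hall i₀ hi₀)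

end ElementMatching

open ElementMatching

theorem sp_eq_remaining (n m : ℕ) [NeZero m] (k : ℕ) :
    Sp n m k = remaining (cst n m) (Sp n m 0) k := by
  induction k with
  | zero => rfl
  | succ k ih => rw [remaining, ← ih]; rfl

theorem mset_eq_matchedAt (n m : ℕ) [NeZero m] (k : ℕ) :
    MSet n m k = matchedAt (cst n m) (Sp n m 0) k := by
  rw [matchedAt, ← sp_eq_remaining]; rfl

theorem element_matching_acyclic_general (n m : ℕ) [NeZero m] :
    (∀ k < m, ∀ σ ∈ MSet n m k, σ ⋖ insert (cst n m k) σ ∧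
      insert (cst n m k) σ ∈ Sp n m 0) ∧
    (∀ k < m, ∀ k' < m, ∀ σ ∈ MSet n m k, ∀ σ' ∈ MSet n m k',
      insert (cst n m k) σ = insert (cst n m k') σ' → k = k' ∧ σ = σ') ∧
    (∀ k < m, ∀ k' < m, ∀ σ ∈ MSet n m k, ¬ ∃ τ ∈ MSet n m k', σ = insert (cst n m k') τ) ∧
    ¬ ∃ (t : ℕ) (f : ℕ → Finset (Fin n → Fin m)) (j : ℕ → ℕ), 2 ≤ t ∧
        (∀ i < t, j i < m ∧ f i ∈ MSet n m (j i)) ∧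
        (∀ i < t, ∀ i' < t, f i = f i' → i = i') ∧
        (∀ i < t, f ((i + 1) % t) ⋖ insert (cst n m (j i)) (f i)) := by
  simp only [mset_eq_matchedAt]
  refine ⟨fun k _ σ hσ => ⟨covBy_insert_of_mem_matchedAt hσ, insert_mem_of_mem_matchedAt hσ⟩,
    fun k _ k' _ σ hσ σ' hσ' h => ?_,
    fun k _ k' _ σ hσ ⟨τ, hτ, h⟩ => ne_insert_of_mem_matchedAt hσ hτ h, ?_⟩
  · obtain rfl := stage_eq_of_insert_eq_insert hσ hσ' h
    exact ⟨rfl, eq_of_mem_matchedAt_of_insert_eq_insert hσ hσ' h⟩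
  · rintro ⟨t, f, j, ht, hf, hcycle⟩
    exact not_exists_cycle ⟨t, f, j, ht, fun i hi => (hf i hi).2, hcycle⟩

/-- The element matching `μ = ⋃ μᵢ` obtained by successively matching faces of
`𝒩(G)` with the constant maps `⟨1⟩, …, ⟨m⟩` is a well-defined acyclic matching on
the face poset of `𝒩(G)`: each matched face is covered by its partner, distinct
matched faces have distinct partners, no face is simultaneously matched up and
down, and there is no alternating cycle
`μ(σ₁) ≻ σ₂, μ(σ₂) ≻ σ₃, …, μ(σ_t) ≻ σ₁` with `t ≥ 2` and the `σᵢ` distinct. -/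
theorem element_matching_acyclic (n m : ℕ) [NeZero m] (hn : 3 ≤ n) (hnm : n < m) :
    (∀ k < m, ∀ σ ∈ MSet n m k, σ ⋖ insert (cst n m k) σ ∧
      insert (cst n m k) σ ∈ Sp n m 0) ∧
    (∀ k < m, ∀ k' < m, ∀ σ ∈ MSet n m k, ∀ σ' ∈ MSet n m k',
      insert (cst n m k) σ = insert (cst n m k') σ' → k = k' ∧ σ = σ') ∧
    (∀ k < m, ∀ k' < m, ∀ σ ∈ MSet n m k, ¬ ∃ τ ∈ MSet n m k', σ = insert (cst n m k') τ) ∧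
    ¬ ∃ (t : ℕ) (f : ℕ → Finset (Fin n → Fin m)) (j : ℕ → ℕ), 2 ≤ t ∧
        (∀ i < t, j i < m ∧ f i ∈ MSet n m (j i)) ∧
        (∀ i < t, ∀ i' < t, f i = f i' → i = i') ∧
        (∀ i < t, f ((i + 1) % t) ⋖ insert (cst n m (j i)) (f i)) :=
  element_matching_acyclic_general n m
end

section
/- Let $G$ be the subgraph of $K_m^{K_n}$ induced by constant and injective maps. If $\sigma$ is a simplex of $\mathcal{N}(G)$ whose only common neighbor is the constant map $\langle 1 \rangle$ and $\sigma$ is critical for the matching $\mu$ of the paper, then $\sigma = \{\langle 2 \rangle, \langle 3 \rangle, \dots, \langle m \rangle\}$. -/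
/-!
Every vertex of `σ` avoids the colour `1`, since `⟨1⟩` is a common neighbour. If all vertices of
`σ` are constant maps, uniqueness of the common neighbour forces `σ` to contain every constant map
`⟨x⟩` with `x ≠ 1`: otherwise `⟨x⟩` would be a second common neighbour.

So suppose that `σ` contains a non-constant map, and let `v` be the least colour taken by such a
map `f₀`. Criticality forces `⟨k⟩ ∈ σ` for `1 < k ≤ v`: otherwise `σ` survives until stage `k`
and is then matched with `σ ∪ {⟨k⟩}`. But then `σ ∖ {⟨v⟩}` also survives until stage `v`, and `σ`
is matched with it there. The delicate point is that `σ ∖ {⟨v⟩} ∪ {⟨1⟩}` is not a face: a common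
neighbour `h` of it that avoids `v` would be a common neighbour of `σ`, a constant one clashes with
`f₀`, and an injective one taking the value `v` can be moved to an injective common neighbour of
`σ` by replacing `v` with `1`.
-/

open Function Finset

lemma Function.Injective.update_of_forall_ne {α β : Type*} [DecidableEq α] {f : α → β}
    (hf : Injective f) {b : β} (hb : ∀ a, f a ≠ b) (a₀ : α) : Injective (update f a₀ b) := by
  intro a a' h
  by_cases ha : a = a₀ <;> by_cases ha' : a' = a₀
  · rw [ha, ha']
  · subst ha; rw [update_self, update_of_ne ha'] at h; exact (hb a' h.symm).elim
  · subst ha'; rw [update_self, update_of_ne ha] at h; exact (hb a h).elim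
  · rw [update_of_ne ha, update_of_ne ha'] at h; exact hf h

section ExpGraph

variable {n m : ℕ}

def commonNbrs (n m : ℕ) (σ : Finset (Fin n → Fin m)) : Set (Fin n → Fin m) :=
  {h | GVert n m h ∧ ∀ f ∈ σ, ExpAdj n m f h}

lemma gVert_const (c : Fin m) : GVert n m (fun _ => c) :=
  Or.inl ⟨c, fun _ => rfl⟩

lemma ExpAdj.symm {f g : Fin n → Fin m} (h : ExpAdj n m f g) : ExpAdj n m g f :=
  fun i j hij => (h j i hij.symm).symm

lemma expAdj_const_of_forall_ne {f : Fin n → Fin m} {c : Fin m} (h : ∀ i, f i ≠ c) :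
    ExpAdj n m f (fun _ => c) :=
  fun i _ _ => h i

lemma expAdj_const_iff (hn : 2 ≤ n) {f : Fin n → Fin m} {c : Fin m} :
    ExpAdj n m f (fun _ => c) ↔ ∀ i, f i ≠ c := by
  refine ⟨fun h i => ?_, expAdj_const_of_forall_ne⟩
  have : Nontrivial (Fin n) := Fin.nontrivial_iff_two_le.2 hn
  obtain ⟨j, hj⟩ := exists_ne i
  exact h i j hj.symm

lemma not_expAdj_const_self (hn : 2 ≤ n) (c : Fin m) :
    ¬ ExpAdj n m (fun _ => c) (fun _ => c) :=
  fun h => (expAdj_const_iff hn).1 h ⟨0, by omega⟩ rfl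

end ExpGraph

section Matching

variable {n m : ℕ} [NeZero m]

@[simp]
lemma cst_val (c : Fin m) : cst n m c = fun _ => c :=
  funext fun _ => Fin.ofNat_val_eq_self c

lemma cst_zero : cst n m 0 = fun _ => 0 :=
  cst_val 0

lemma cst_val_injective (hn : 0 < n) : Injective fun c : Fin m => cst n m c := by
  intro c d h
  simpa using congrFun h ⟨0, hn⟩

lemma Sp_antitone : Antitone (Sp n m) :=
  antitone_nat_of_succ_le fun _ _ h => h.1

lemma notMem_Sp_succ_of_mem_MSet {k : ℕ} {ρ : Finset (Fin n → Fin m)} (h : ρ ∈ MSet n m k) :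
    ρ ∉ Sp n m (k + 1) :=
  fun h' => h'.2 (Or.inl h)

lemma mem_Sp_succ_of_insert_notMem {k : ℕ} {τ : Finset (Fin n → Fin m)} (hτ : τ ∈ Sp n m k)
    (hc : cst n m k ∉ τ) (hins : insert (cst n m k) τ ∉ Sp n m k) : τ ∈ Sp n m (k + 1) := by
  refine ⟨hτ, ?_⟩
  rintro (⟨-, -, h⟩ | ⟨α, -, rfl⟩)
  · exact hins h
  · exact hc (mem_insert_self _ _)

lemma mem_Sp_succ_of_erase_notMem {k : ℕ} {τ : Finset (Fin n → Fin m)} (hτ : τ ∈ Sp n m k)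
    (hc : cst n m k ∈ τ) (herase : τ.erase (cst n m k) ∉ Sp n m k) : τ ∈ Sp n m (k + 1) := by
  refine ⟨hτ, ?_⟩
  rintro (⟨-, h, -⟩ | ⟨α, ⟨hα, hcα, -⟩, rfl⟩)
  · exact h hc
  · exact herase (by rwa [erase_insert hcα])

lemma mem_Sp_of_forall_erase_notMem {τ : Finset (Fin n → Fin m)} (h₁ : τ ∈ Sp n m 1)
    {k : ℕ} (hk : k ≤ m)
    (H : ∀ c : Fin m, 0 < c → (c : ℕ) < k → cst n m c ∈ τ ∧ τ.erase (cst n m c) ∉ Sp n m c) :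
    τ ∈ Sp n m k := by
  induction k with
  | zero => exact Sp_antitone zero_le_one h₁
  | succ k ih =>
    rcases k.eq_zero_or_pos with rfl | hk₀
    · exact h₁
    · have hc := H ⟨k, by omega⟩ (Fin.val_pos_iff.1 hk₀) k.lt_succ_self
      exact mem_Sp_succ_of_erase_notMem (ih (by omega) fun c h₀ hc => H c h₀ (by omega)) hc.1 hc.2

lemma mem_Sp_zero_of_forall_ne {ρ : Finset (Fin n → Fin m)} (hne : ρ.Nonempty)
    (hG : ∀ f ∈ ρ, GVert n m f) {c : Fin m} (hc : ∀ f ∈ ρ, ∀ i, f i ≠ c) : ρ ∈ Sp n m 0 :=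
  ⟨hne, hG, _, gVert_const c, fun f hf => expAdj_const_of_forall_ne (hc f hf)⟩

/-- `ρ` is matched with `insert (cst n m 0) ρ` at the first stage: `fun _ => c` is a common
neighbour of the latter. -/
lemma notMem_Sp_of_forall_ne (hn : 0 < n) {ρ : Finset (Fin n → Fin m)} (hne : ρ.Nonempty)
    (hG : ∀ f ∈ ρ, GVert n m f) {c : Fin m} (hc : 0 < c) (h : ∀ f ∈ ρ, ∀ i, f i ≠ 0 ∧ f i ≠ c) :
    ρ ∉ Sp n m c := by
  have hmatched : ρ ∈ MSet n m 0 := by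
    refine ⟨mem_Sp_zero_of_forall_ne hne hG fun f hf i => (h f hf i).1, ?_, ?_⟩
    · rw [cst_zero]
      exact fun h₀ => (h _ h₀ ⟨0, hn⟩).1 rfl
    · refine mem_Sp_zero_of_forall_ne (c := c) (insert_nonempty _ _) ?_ ?_
      · rw [forall_mem_insert, cst_zero]
        exact ⟨gVert_const 0, hG⟩
      · rw [forall_mem_insert, cst_zero]
        exact ⟨fun _ => hc.ne, fun f hf i => (h f hf i).2⟩
  exact fun hρ => notMem_Sp_succ_of_mem_MSet hmatched (Sp_antitone (Fin.val_pos_iff.2 hc) hρ)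

lemma Critical.mem_Sp {σ : Finset (Fin n → Fin m)} (hcrit : Critical n m σ) {k : ℕ}
    (hk : k ≤ m) : σ ∈ Sp n m k := by
  induction k with
  | zero => exact hcrit.1
  | succ k ih =>
    refine ⟨ih (by omega), ?_⟩
    rintro (h | ⟨τ, hτ, rfl⟩)
    · exact (hcrit.2 k hk).1 h
    · exact (hcrit.2 k hk).2 ⟨τ, hτ, rfl⟩

end Matching

section UniqueNeighbour

variable {n m : ℕ} [NeZero m] {σ : Finset (Fin n → Fin m)}

lemma eq_const_zero_of_mem_commonNbrs (hN : commonNbrs n m σ = {cst n m 0})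
    {h : Fin n → Fin m} (hh : h ∈ commonNbrs n m σ) : h = fun _ => 0 := by
  rwa [hN, cst_zero] at hh

lemma apply_ne_zero_of_commonNbrs_eq (hn : 2 ≤ n) (hN : commonNbrs n m σ = {cst n m 0})
    {f : Fin n → Fin m} (hf : f ∈ σ) (i : Fin n) : f i ≠ 0 := by
  have h₀ : cst n m 0 ∈ commonNbrs n m σ := hN ▸ rfl
  rw [cst_zero] at h₀
  exact (expAdj_const_iff hn).1 (h₀.2 f hf) i

lemma cst_zero_notMem_of_commonNbrs_eq (hn : 2 ≤ n) (hN : commonNbrs n m σ = {cst n m 0}) :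
    cst n m 0 ∉ σ := by
  rw [cst_zero]
  exact fun h => apply_ne_zero_of_commonNbrs_eq hn hN h ⟨0, by omega⟩ rfl

lemma insert_cst_zero_notMem_Sp_zero (hn : 2 ≤ n) (hN : commonNbrs n m σ = {cst n m 0})
    {ρ : Finset (Fin n → Fin m)} (hρ : σ ⊆ ρ) : insert (cst n m 0) ρ ∉ Sp n m 0 := by
  rintro ⟨-, -, h, hG, hadj⟩
  have hh := eq_const_zero_of_mem_commonNbrs hN
    ⟨hG, fun f hf => hadj f (mem_insert_of_mem (hρ hf))⟩
  have h₀ := hadj _ (mem_insert_self _ _)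
  rw [hh, cst_zero] at h₀
  exact not_expAdj_const_self hn 0 h₀

lemma insert_cst_zero_erase_notMem_Sp_zero (hn : 2 ≤ n) (hN : commonNbrs n m σ = {cst n m 0})
    {v : Fin m} {f₀ : Fin n → Fin m} {i₀ : Fin n} (hf₀ : f₀ ∈ σ.erase (cst n m v))
    (hf₀v : f₀ i₀ = v) : insert (cst n m 0) (σ.erase (cst n m v)) ∉ Sp n m 0 := by
  have : Nontrivial (Fin n) := Fin.nontrivial_iff_two_le.2 hn
  rintro ⟨-, -, h, hG, hadj⟩
  have h₀ : ∀ j, h j ≠ 0 := by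
    have := (hadj _ (mem_insert_self _ _)).symm
    rwa [cst_zero, expAdj_const_iff hn] at this
  have hα : ∀ f ∈ σ, f ≠ cst n m v → ExpAdj n m f h :=
    fun f hf hfv => hadj f (mem_insert_of_mem (mem_erase.2 ⟨hfv, hf⟩))
  by_cases hv : ∀ j, h j ≠ v
  · have hN' : h ∈ commonNbrs n m σ := by
      refine ⟨hG, fun f hf => ?_⟩
      by_cases hfv : f = cst n m v
      · rw [hfv, cst_val]
        exact (expAdj_const_of_forall_ne hv).symm
      · exact hα f hf hfv
    exact h₀ ⟨0, by omega⟩ (by rw [eq_const_zero_of_mem_commonNbrs hN hN'])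
  obtain ⟨j₀, hj₀⟩ := not_forall_not.1 hv
  rcases hG with ⟨x, hx⟩ | hinj
  · obtain ⟨j, hj⟩ := exists_ne i₀
    exact hα f₀ (mem_of_mem_erase hf₀) (ne_of_mem_erase hf₀) i₀ j hj.symm
      (by rw [hx j, ← hx j₀, hj₀, hf₀v])
  · -- replacing the value `v` of `h` by `0` gives an injective common neighbour of `σ`
    have hN' : update h j₀ 0 ∈ commonNbrs n m σ := by
      refine ⟨Or.inr (hinj.update_of_forall_ne h₀ j₀), fun f hf i j hij => ?_⟩
      rcases eq_or_ne j j₀ with rfl | hj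
      · rw [update_self]
        exact apply_ne_zero_of_commonNbrs_eq hn hN hf i
      rw [update_of_ne hj]
      by_cases hfv : f = cst n m v
      · rw [hfv, cst_val, ← hj₀]
        exact fun he => hj (hinj he.symm)
      · exact hα f hf hfv i j hij
    obtain ⟨j, hj⟩ := exists_ne j₀
    have := congrFun (eq_const_zero_of_mem_commonNbrs hN hN') j
    rw [update_of_ne hj] at this
    exact h₀ j this

lemma erase_cst_notMem_Sp (hn : 2 ≤ n) (hσ : σ ∈ Sp n m 0)
    (hN : commonNbrs n m σ = {cst n m 0}) {v : Fin m}
    (hv : ∀ f ∈ σ, ∀ i, f i < v → f = fun _ => f i) {c k : Fin m} (hc : 0 < c) (hcv : c < v)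
    (hck : c < k) {τ : Finset (Fin n → Fin m)} (hτ : τ ⊆ insert (cst n m k) σ)
    (hne : (τ.erase (cst n m c)).Nonempty) : τ.erase (cst n m c) ∉ Sp n m c := by
  have hτ' : ∀ f ∈ τ.erase (cst n m c), f = cst n m k ∨ f ∈ σ :=
    fun f hf => mem_insert.1 (hτ (mem_of_mem_erase hf))
  refine notMem_Sp_of_forall_ne (by omega) hne (fun f hf => ?_) hc fun f hf i => ?_
  · rcases hτ' f hf with rfl | hfσ
    · rw [cst_val]
      exact gVert_const k
    · exact hσ.2.1 f hfσ
  · rcases hτ' f hf with rfl | hfσ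
    · rw [cst_val]
      exact ⟨(hc.trans hck).ne', hck.ne'⟩
    · refine ⟨apply_ne_zero_of_commonNbrs_eq hn hN hfσ i, fun hfi => ne_of_mem_erase hf ?_⟩
      rw [hv f hfσ i (hfi ▸ hcv), hfi, cst_val]

lemma cst_mem_of_critical (hn : 2 ≤ n) (hN : commonNbrs n m σ = {cst n m 0})
    (hcrit : Critical n m σ) {v : Fin m} (hv : ∀ f ∈ σ, ∀ i, f i < v → f = fun _ => f i)
    {k : Fin m} (hk : 0 < k) (hkv : k ≤ v) : cst n m k ∈ σ := by
  induction k using WellFoundedLT.induction with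
  | _ k ih =>
  by_contra hkσ
  -- otherwise `σ` is matched with `insert (cst n m k) σ` at stage `k`
  refine (hcrit.2 k k.isLt).1 ⟨hcrit.mem_Sp k.isLt.le, hkσ, ?_⟩
  refine mem_Sp_of_forall_erase_notMem ?_ k.isLt.le fun c hc (hck : c < k) =>
    ⟨mem_insert_of_mem (ih c hck hc (hck.le.trans hkv)),
      erase_cst_notMem_Sp hn hcrit.1 hN hv hc (hck.trans_le hkv) hck subset_rfl
        ⟨cst n m k, mem_erase.2 ⟨(cst_val_injective (by omega)).ne hck.ne', mem_insert_self _ _⟩⟩⟩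
  refine mem_Sp_succ_of_insert_notMem ?_ ?_
    (insert_cst_zero_notMem_Sp_zero hn hN (subset_insert _ _))
  · refine mem_Sp_zero_of_forall_ne (c := 0) (insert_nonempty _ _) ?_ ?_ <;>
      rw [forall_mem_insert, cst_val]
    · exact ⟨gVert_const k, hcrit.1.2.1⟩
    · exact ⟨fun _ => hk.ne', fun f hf => apply_ne_zero_of_commonNbrs_eq hn hN hf⟩
  · rw [mem_insert, not_or]
    exact ⟨(cst_val_injective (by omega)).ne hk.ne, cst_zero_notMem_of_commonNbrs_eq hn hN⟩

lemma erase_cst_mem_Sp (hn : 2 ≤ n) (hN : commonNbrs n m σ = {cst n m 0})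
    (hcrit : Critical n m σ) {v : Fin m} (hv : ∀ f ∈ σ, ∀ i, f i < v → f = fun _ => f i)
    {f₀ : Fin n → Fin m} {i₀ : Fin n} (hf₀ : f₀ ∈ σ.erase (cst n m v)) (hf₀v : f₀ i₀ = v) :
    σ.erase (cst n m v) ∈ Sp n m v := by
  refine mem_Sp_of_forall_erase_notMem ?_ v.isLt.le fun c hc (hcv : c < v) => ⟨?_, ?_⟩
  · refine mem_Sp_succ_of_insert_notMem ?_
      (fun h => cst_zero_notMem_of_commonNbrs_eq hn hN (mem_of_mem_erase h))
      (insert_cst_zero_erase_notMem_Sp_zero hn hN hf₀ hf₀v)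
    exact mem_Sp_zero_of_forall_ne ⟨f₀, hf₀⟩ (fun f hf => hcrit.1.2.1 f (mem_of_mem_erase hf))
      fun f hf => apply_ne_zero_of_commonNbrs_eq hn hN (mem_of_mem_erase hf)
  · exact mem_erase.2 ⟨(cst_val_injective (by omega)).ne (ne_of_lt hcv),
      cst_mem_of_critical hn hN hcrit hv hc (le_of_lt hcv)⟩
  · refine erase_cst_notMem_Sp hn hcrit.1 hN hv hc hcv hcv
      ((erase_subset _ _).trans (subset_insert _ _)) ⟨f₀, mem_erase.2 ⟨?_, hf₀⟩⟩
    rw [cst_val]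
    exact fun h => (ne_of_lt hcv).symm (hf₀v ▸ congrFun h i₀)

lemma forall_eq_const_of_critical (hn : 2 ≤ n) (hN : commonNbrs n m σ = {cst n m 0})
    (hcrit : Critical n m σ) : ∀ f ∈ σ, ∃ x, f = fun _ => x := by
  by_contra! ⟨f, hf, hfc⟩
  obtain ⟨v, ⟨f₀, hf₀, i₀, hf₀v, hf₀c⟩, hmin⟩ := wellFounded_lt.has_min
    {c : Fin m | ∃ f ∈ σ, ∃ i, f i = c ∧ f ≠ fun _ => c} ⟨_, f, hf, ⟨0, by omega⟩, rfl, hfc _⟩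
  have hv : ∀ f ∈ σ, ∀ i, f i < v → f = fun _ => f i :=
    fun f hf i hi => by_contra fun hfc => hmin _ ⟨f, hf, i, rfl, hfc⟩ hi
  have hv₀ : 0 < v := pos_iff_ne_zero.2 (hf₀v ▸ apply_ne_zero_of_commonNbrs_eq hn hN hf₀ i₀)
  have hvσ : cst n m v ∈ σ := cst_mem_of_critical hn hN hcrit hv hv₀ le_rfl
  have hα := erase_cst_mem_Sp hn hN hcrit hv (mem_erase.2 ⟨by rwa [cst_val], hf₀⟩) hf₀v
  refine (hcrit.2 v v.isLt).2 ⟨_, ⟨hα, notMem_erase _ _, ?_⟩, (insert_erase hvσ).symm⟩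
  rw [insert_erase hvσ]
  exact hcrit.mem_Sp v.isLt.le

lemma eq_image_const_of_forall_eq_const (hn : 2 ≤ n) (hN : commonNbrs n m σ = {cst n m 0})
    (hconst : ∀ f ∈ σ, ∃ x, f = fun _ => x) :
    σ = (univ.erase 0).image fun x : Fin m => (fun _ => x : Fin n → Fin m) := by
  ext f
  simp only [mem_image, mem_erase, mem_univ, and_true]
  constructor
  · intro hf
    obtain ⟨x, rfl⟩ := hconst f hf
    exact ⟨x, apply_ne_zero_of_commonNbrs_eq hn hN hf ⟨0, by omega⟩, rfl⟩
  · rintro ⟨x, hx, rfl⟩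
    -- `fun _ => x` is not a common neighbour, so it meets a vertex of `σ`, necessarily itself
    have hxN : (fun _ => x) ∉ commonNbrs n m σ :=
      fun h => hx (congrFun (eq_const_zero_of_mem_commonNbrs hN h) ⟨0, by omega⟩)
    simp only [commonNbrs, Set.mem_ofPred_eq, gVert_const, true_and, not_forall] at hxN
    obtain ⟨g, hg, hgx⟩ := hxN
    obtain ⟨i, hi⟩ : ∃ i, g i = x := not_forall_not.1 fun h => hgx (expAdj_const_of_forall_ne h)
    obtain ⟨y, rfl⟩ := hconst g hg
    rwa [← hi]

end UniqueNeighbour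

theorem critical_cell_with_unique_neighbor_general (n m : ℕ) [NeZero m]
    (hn : 3 ≤ n) (σ : Finset (Fin n → Fin m))
    (hN : {h : Fin n → Fin m | GVert n m h ∧ ∀ f ∈ σ, ExpAdj n m f h} = {cst n m 0})
    (hcrit : Critical n m σ) :
    σ = (Finset.univ.erase (0 : Fin m)).image
      (fun x : Fin m => (fun _ => x : Fin n → Fin m)) :=
  eq_image_const_of_forall_eq_const (by omega) hN
    (forall_eq_const_of_critical (by omega) hN hcrit)

/-- If `σ` is a simplex of `𝒩(G)` whose only common neighbor in `G` is the
constant map `⟨1⟩`, and `σ` is critical for the matching `μ`, then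
`σ = {⟨2⟩, ⟨3⟩, …, ⟨m⟩}`. -/
theorem critical_cell_with_unique_neighbor (n m : ℕ) [NeZero m]
    (hn : 3 ≤ n) (hnm : n < m) (σ : Finset (Fin n → Fin m))
    (hσ : σ ∈ Sp n m 0)
    (hN : {h : Fin n → Fin m | GVert n m h ∧ ∀ f ∈ σ, ExpAdj n m f h} = {cst n m 0})
    (hcrit : Critical n m σ) :
    σ = (Finset.univ.erase (0 : Fin m)).image
      (fun x : Fin m => (fun _ => x : Fin n → Fin m)) :=
  critical_cell_with_unique_neighbor_general n m hn σ hN hcrit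
end
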